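/- The combinatorial identity: for every n ≥ 1, ∑_{k=2}^{n} 2^{n−k} · C(n−1, k−1) · (2^k + 2·(−1)^k)/3 = 2·(4^{n−1} − 1)/3. -/

import Mathlib

/-!
Substitute `j = k - 1` and `m = n - 1`. After multiplying by `3`, the sum becomes
`∑ⱼ 2^(m-j) C(m,j) (2^(j+1) + 2(-1)^(j+1))` over `0 ≤ j ≤ m` (the `j = 0` term vanishes),
and two applications of the binomial theorem, `(2 + 2)^m = 4^m` and `(-1 + 2)^m = 1`,
evaluate it as `2·4^m - 2`.
-/

open Finset

theorem three_dvd_two_pow_add_two_mul_neg_one_pow (k : ℕ) : (3 : ℤ) ∣ 2 ^ k + 2 * (-1) ^ k := by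
  have h : (3 : ℤ) ∣ 2 ^ k - (-1) ^ k := by simpa using sub_dvd_pow_sub_pow (2 : ℤ) (-1) k
  rw [show (2 : ℤ) ^ k + 2 * (-1) ^ k = 2 ^ k - (-1) ^ k + 3 * (-1) ^ k by ring]
  exact dvd_add h (dvd_mul_right _ _)

theorem sum_two_pow_mul_choose_mul_two_pow_add_two_mul_neg_one_pow {R : Type*} [CommRing R]
    (m : ℕ) :
    ∑ j ∈ range (m + 1), (2 : R) ^ (m - j) * m.choose j * (2 ^ (j + 1) + 2 * (-1) ^ (j + 1)) =
      2 * (4 ^ m - 1) := by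
  have h4 : ∑ j ∈ range (m + 1), (2 : R) ^ j * 2 ^ (m - j) * m.choose j = 4 ^ m := by
    rw [← add_pow]; norm_num
  have h1 : ∑ j ∈ range (m + 1), (-1 : R) ^ j * 2 ^ (m - j) * m.choose j = 1 := by
    rw [← add_pow]; norm_num
  calc _ = 2 * ∑ j ∈ range (m + 1), (2 : R) ^ j * 2 ^ (m - j) * m.choose j
        - 2 * ∑ j ∈ range (m + 1), (-1 : R) ^ j * 2 ^ (m - j) * m.choose j := by
        rw [mul_sum, mul_sum, ← sum_sub_distrib]
        exact sum_congr rfl fun j _ => by ring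
    _ = _ := by rw [h4, h1]; ring

theorem stmt_1_general (n : ℕ) :
    ∑ k ∈ Finset.Icc 2 n,
      (2 : ℤ) ^ (n - k) * ((n - 1).choose (k - 1)) * ((2 ^ k + 2 * (-1) ^ k) / 3) =
    2 * (4 ^ (n - 1) - 1) / 3 := by
  rcases n with _ | m
  · simp
  refine (Int.ediv_eq_of_eq_mul_left (by norm_num) ?_).symm
  rw [Nat.add_sub_cancel, ← sum_two_pow_mul_choose_mul_two_pow_add_two_mul_neg_one_pow,
    sum_range_succ', ← Ico_add_one_right_eq_Icc, sum_Ico_eq_sum_range, sum_mul]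
  simp only [Nat.reduceSubDiff]
  norm_num
  refine sum_congr rfl fun j _ => ?_
  rw [mul_assoc _ _ (3 : ℤ), Int.ediv_mul_cancel (three_dvd_two_pow_add_two_mul_neg_one_pow _),
    show m + 1 - (2 + j) = m - (j + 1) by omega, add_comm 1 j, show 2 + j = j + 1 + 1 by omega]

theorem stmt_1 (n : ℕ) (hn : 1 ≤ n) :
    ∑ k ∈ Finset.Icc 2 n,
      (2 : ℤ) ^ (n - k) * ((n - 1).choose (k - 1)) * ((2 ^ k + 2 * (-1) ^ k) / 3) =
    2 * (4 ^ (n - 1) - 1) / 3 :=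
  stmt_1_general n
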